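/- Let λ₁ be a rotationally invariant positive measure on the star S₀ whose restriction to [0,α] is s₁(x)dx, and let π_n be its n-th monic orthogonal polynomial. Then π_n(e^{2πi/3}z) = e^{2πin/3}π_n(z), and consequently π_{3k}(τ^{1/3}), π_{3k+1}(τ^{1/3})/τ^{1/3}, and π_{3k+2}(τ^{1/3})/τ^{2/3} are the monic orthogonal polynomials of degree k with respect to the measures s₁(τ^{1/3})τ^{-2/3}dτ, s₁(τ^{1/3})dτ, and s₁(τ^{1/3})τ^{2/3}dτ on [0,α³], respectively. -/

import Mathlib

/-!
The form `⟨f, g⟩ = ∑ₘ ∫₀^α f(ωᵐt) conj g(ωᵐt) s₁(t) dt` on the star is invariant under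
`z ↦ ωz` and positive definite on polynomials (a nonzero polynomial has finitely many zeros
and `s₁` is not a.e. zero). Hence monic orthogonal polynomials are unique, and since
`ω⁻ⁿ π_n(ωz)` is again monic and orthogonal, it equals `π_n(z)`. Comparing coefficients, `π_n`
only contains powers `zᵐ` with `m ≡ n (mod 3)`, i.e. `π_n(z) = zᵉ q(z³)`. For `r ≡ n (mod 3)`
the integrand `π_n(z) conj(zʳ)` is itself rotation invariant, so orthogonality over the star
is three times orthogonality against `tʳ s₁(t)` on `[0, α]`, and the substitution `τ = t³`
turns the latter into orthogonality of `q` against `τʲ` for the stated weights.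
-/

open Complex Finset intervalIntegral Polynomial MeasureTheory Set

noncomputable section

/-- The primitive cube root of unity `e^{2πi/3}`. -/
def ω : ℂ := Complex.exp (2 * Real.pi * Complex.I / 3)

/-- The real cube root. -/
def rcbrt (x : ℝ) : ℝ := Real.sign x * |x| ^ ((1 : ℝ) / 3)

open ComplexConjugate

theorem isPrimitiveRoot_omega : IsPrimitiveRoot ω 3 := by
  simpa [ω] using Complex.isPrimitiveRoot_exp 3 (by norm_num)

theorem omega_pow_mul_conj_omega_pow (k : ℕ) : ω ^ k * conj ω ^ k = 1 := by
  rw [← mul_pow, Complex.mul_conj, Complex.normSq_eq_norm_sq,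
    isPrimitiveRoot_omega.norm'_eq_one (by norm_num)]
  simp

theorem omega_pow_eq_omega_pow_iff {m n : ℕ} : ω ^ m = ω ^ n ↔ m ≡ n [MOD 3] := by
  rw [(isPrimitiveRoot_omega.isOfFinOrder (by norm_num)).pow_eq_pow_iff_modEq,
    ← isPrimitiveRoot_omega.eq_orderOf]

/-- `∫_{S₀} g dλ₁`, written as a sum over the three rays `ωᵐ [0, α]` of the star `S₀`. -/
def starIntegral (α : ℝ) (s : ℝ → ℝ) (g : ℂ → ℂ) : ℂ :=
  ∑ m ∈ range 3, ∫ t in (0 : ℝ)..α, g (ω ^ m * t) * s t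

section StarIntegral

variable {α : ℝ} {s : ℝ → ℝ}

theorem starIntegral_comp_omega_mul (g : ℂ → ℂ) :
    starIntegral α s (fun z => g (ω * z)) = starIntegral α s g := by
  have hshift : ∀ m : ℕ, (fun t : ℝ => g (ω * (ω ^ m * t)) * s t) =
      fun t : ℝ => g (ω ^ (m + 1) * t) * s t := by
    intro m; ext t; rw [pow_succ', mul_assoc]
  simp only [starIntegral, hshift, sum_range_succ, sum_range_zero, zero_add,
    isPrimitiveRoot_omega.pow_eq_one, pow_zero]
  ring

theorem starIntegral_const_mul (c : ℂ) (g : ℂ → ℂ) :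
    starIntegral α s (fun z => c * g z) = c * starIntegral α s g := by
  simp only [starIntegral, mul_sum, ← intervalIntegral.integral_const_mul, mul_assoc]

theorem intervalIntegrable_comp_omega_pow_mul (hs : IntervalIntegrable s volume 0 α)
    {g : ℂ → ℂ} (hg : Continuous g) (m : ℕ) :
    IntervalIntegrable (fun t : ℝ => g (ω ^ m * t) * s t) volume 0 α :=
  IntervalIntegrable.continuousOn_mul ⟨hs.1.ofReal, hs.2.ofReal⟩ (by fun_prop)

theorem starIntegral_sub (hs : IntervalIntegrable s volume 0 α) {f g : ℂ → ℂ}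
    (hf : Continuous f) (hg : Continuous g) :
    starIntegral α s (fun z => f z - g z) = starIntegral α s f - starIntegral α s g := by
  simp only [starIntegral, ← sum_sub_distrib, sub_mul]
  refine sum_congr rfl fun m _ => integral_sub ?_ ?_
  exacts [intervalIntegrable_comp_omega_pow_mul hs hf m,
    intervalIntegrable_comp_omega_pow_mul hs hg m]

theorem starIntegral_finset_sum (hs : IntervalIntegrable s volume 0 α) {ι : Type*}
    (u : Finset ι) {f : ι → ℂ → ℂ} (hf : ∀ i ∈ u, Continuous (f i)) :
    starIntegral α s (fun z => ∑ i ∈ u, f i z) = ∑ i ∈ u, starIntegral α s (f i) := by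
  simp only [starIntegral, sum_mul]
  rw [sum_comm]
  refine sum_congr rfl fun m _ => integral_finsetSum fun i hi => ?_
  exact intervalIntegrable_comp_omega_pow_mul hs (hf i hi) m

theorem starIntegral_eq_three_mul_of_comp_omega_mul {g : ℂ → ℂ} (hg : ∀ z, g (ω * z) = g z) :
    starIntegral α s g = 3 * ∫ t in (0 : ℝ)..α, g t * s t := by
  have hpow : ∀ m : ℕ, ∀ z, g (ω ^ m * z) = g z := by
    intro m
    induction m with
    | zero => simp
    | succ m ih => intro z; rw [pow_succ', mul_assoc, hg, ih]
  simp [starIntegral, hpow]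

end StarIntegral

theorem integral_eq_zero_of_integral_normSq_eval_mul_eq_zero {a b : ℝ} {s : ℝ → ℝ} (hab : a ≤ b)
    (hs_nonneg : 0 ≤ᵐ[volume.restrict (Ioc a b)] s) (hs : IntervalIntegrable s volume a b)
    {d : ℂ[X]} (hd : d ≠ 0) (h : ∫ t in a..b, normSq (d.eval (t : ℂ)) * s t = 0) :
    ∫ t in a..b, s t = 0 := by
  have hnonneg : 0 ≤ᵐ[volume.restrict (Ioc a b)] fun t => normSq (d.eval (t : ℂ)) * s t := by
    filter_upwards [hs_nonneg] with t ht using mul_nonneg (normSq_nonneg _) ht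
  have hprod_zero := (integral_eq_zero_iff_of_le_of_nonneg_ae hab hnonneg
    (hs.continuousOn_mul (by fun_prop))).mp h
  have hroots : ∀ᵐ t : ℝ, d.eval (t : ℂ) ≠ 0 := by
    have hfin : {t : ℝ | d.eval (t : ℂ) = 0}.Finite :=
      (d.finite_setOfPred_isRoot hd).preimage ofReal_injective.injOn
    exact measure_eq_zero_iff_ae_notMem.mp (hfin.measure_zero _)
  have hs_zero : s =ᵐ[volume.restrict (Ioc a b)] 0 := by
    filter_upwards [hprod_zero, ae_restrict_of_ae hroots] with t hprod hroot
    exact (mul_eq_zero.mp hprod).resolve_left (normSq_eq_zero.not.mpr hroot)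
  rw [integral_of_le hab, integral_congr_ae hs_zero, Pi.zero_def, integral_zero]

theorem Polynomial.eq_zero_of_starIntegral_mul_conj_eq_zero {α : ℝ} {s : ℝ → ℝ} (hα : 0 ≤ α)
    (hs_nonneg : 0 ≤ᵐ[volume.restrict (Ioc 0 α)] s) (hs : IntervalIntegrable s volume 0 α)
    (hs_ne : ∫ t in (0 : ℝ)..α, s t ≠ 0) {d : ℂ[X]}
    (h : starIntegral α s (fun z => d.eval z * conj (d.eval z)) = 0) : d = 0 := by
  by_contra hd
  set I : ℕ → ℝ := fun m => ∫ t in (0 : ℝ)..α, normSq (d.eval (ω ^ m * t)) * s t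
  have hI : starIntegral α s (fun z => d.eval z * conj (d.eval z)) = ∑ m ∈ range 3, (I m : ℂ) := by
    simp only [starIntegral, I, ← integral_ofReal]
    refine sum_congr rfl fun m _ => integral_congr fun t _ => ?_
    simp [mul_conj]
  have hI_nonneg : ∀ m, 0 ≤ I m := fun m => by
    simp only [I, integral_of_le hα]
    exact setIntegral_nonneg_of_ae_restrict
      (by filter_upwards [hs_nonneg] with t ht using mul_nonneg (normSq_nonneg _) ht)
  have hI_sum : I 0 + I 1 + I 2 = 0 := by
    have := hI.symm.trans h
    simp only [sum_range_succ, sum_range_zero, zero_add] at this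
    exact_mod_cast this
  have hI_zero : I 0 = 0 := by linarith [hI_nonneg 0, hI_nonneg 1, hI_nonneg 2]
  exact hs_ne (integral_eq_zero_of_integral_normSq_eval_mul_eq_zero hα hs_nonneg hs hd
    (by simpa [I] using hI_zero))

section Orthogonal

variable {α : ℝ} {s : ℝ → ℝ}

theorem Polynomial.eq_of_monic_of_starIntegral_orthogonal (hα : 0 ≤ α)
    (hs_nonneg : 0 ≤ᵐ[volume.restrict (Ioc 0 α)] s) (hs : IntervalIntegrable s volume 0 α)
    (hs_ne : ∫ t in (0 : ℝ)..α, s t ≠ 0) {P Q : ℂ[X]} {n : ℕ} (hP : P.Monic) (hQ : Q.Monic)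
    (hPn : P.natDegree = n) (hQn : Q.natDegree = n)
    (hP_orth : ∀ k < n, starIntegral α s (fun z => P.eval z * conj (z ^ k)) = 0)
    (hQ_orth : ∀ k < n, starIntegral α s (fun z => Q.eval z * conj (z ^ k)) = 0) :
    P = Q := by
  rw [← sub_eq_zero]
  by_contra hd
  have hd_deg : (P - Q).natDegree < n := by
    rw [natDegree_lt_iff_degree_lt hd, ← hPn, ← degree_eq_natDegree hP.ne_zero]
    exact degree_sub_lt_left
      (by rw [degree_eq_natDegree hP.ne_zero, degree_eq_natDegree hQ.ne_zero, hPn, hQn])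
      hP.ne_zero (by rw [hP.leadingCoeff, hQ.leadingCoeff])
  have hd_orth : ∀ k < n, starIntegral α s (fun z => (P - Q).eval z * conj (z ^ k)) = 0 := by
    intro k hk
    simp only [eval_sub, sub_mul]
    rw [starIntegral_sub hs (by fun_prop) (by fun_prop), hP_orth k hk, hQ_orth k hk, sub_zero]
  refine hd (eq_zero_of_starIntegral_mul_conj_eq_zero hα hs_nonneg hs hs_ne ?_)
  calc starIntegral α s (fun z => (P - Q).eval z * conj ((P - Q).eval z))
      = starIntegral α s (fun z => ∑ k ∈ range n,
          conj ((P - Q).coeff k) * ((P - Q).eval z * conj (z ^ k))) := by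
        congr 1; ext z
        rw [eval_eq_sum_range' hd_deg, map_sum, mul_sum]
        refine sum_congr rfl fun k _ => ?_
        rw [map_mul]; ring
    _ = ∑ k ∈ range n, conj ((P - Q).coeff k) *
          starIntegral α s (fun z => (P - Q).eval z * conj (z ^ k)) := by
        rw [starIntegral_finset_sum hs _ (fun k _ => by fun_prop)]
        exact sum_congr rfl fun k _ => starIntegral_const_mul _ _
    _ = 0 := sum_eq_zero fun k hk => by rw [hd_orth k (mem_range.mp hk), mul_zero]

theorem Polynomial.eval_omega_mul_of_starIntegral_orthogonal (hα : 0 ≤ α)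
    (hs_nonneg : 0 ≤ᵐ[volume.restrict (Ioc 0 α)] s) (hs : IntervalIntegrable s volume 0 α)
    (hs_ne : ∫ t in (0 : ℝ)..α, s t ≠ 0) {P : ℂ[X]} {n : ℕ} (hP : P.Monic)
    (hPn : P.natDegree = n)
    (hP_orth : ∀ k < n, starIntegral α s (fun z => P.eval z * conj (z ^ k)) = 0) (z : ℂ) :
    P.eval (ω * z) = ω ^ n * P.eval z := by
  have hω : ω ≠ 0 := isPrimitiveRoot_omega.ne_zero (by norm_num)
  set Q : ℂ[X] := C (conj ω ^ n) * P.comp (C ω * X)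
  have hQ_lc : Q.leadingCoeff = 1 := by
    rw [leadingCoeff_mul, leadingCoeff_C, leadingCoeff_comp (by simp [natDegree_C_mul_X _ hω]),
      hP.leadingCoeff, hPn, leadingCoeff_C_mul_X, one_mul, mul_comm,
      omega_pow_mul_conj_omega_pow]
  have hQn : Q.natDegree = n := by
    rw [natDegree_C_mul (pow_ne_zero _ (by simpa using hω)), natDegree_comp,
      natDegree_C_mul_X _ hω, hPn, mul_one]
  have hQ_orth : ∀ k < n, starIntegral α s (fun z => Q.eval z * conj (z ^ k)) = 0 := by
    intro k hk
    -- `z ↦ ωz` is unitary, so `conj (zᵏ) = ωᵏ conj ((ωz)ᵏ)`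
    have hrot : ∀ z : ℂ, Q.eval z * conj (z ^ k) =
        conj ω ^ n * ω ^ k * (P.eval (ω * z) * conj ((ω * z) ^ k)) := by
      intro z
      simp only [Q, eval_mul, eval_C, eval_comp, eval_X, map_pow, map_mul, eval_pow]
      linear_combination (-conj ω ^ n * P.eval (ω * z) * conj z ^ k) *
        omega_pow_mul_conj_omega_pow k
    simp only [hrot]
    rw [starIntegral_const_mul, starIntegral_comp_omega_mul (fun z => P.eval z * conj (z ^ k)),
      hP_orth k hk, mul_zero]
  have hPQ := eq_of_monic_of_starIntegral_orthogonal hα hs_nonneg hs hs_ne hP hQ_lc hPn hQn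
    hP_orth hQ_orth
  have hPz : P.eval z = conj ω ^ n * P.eval (ω * z) := by
    conv_lhs => rw [hPQ]
    simp [Q]
  rw [hPz, ← mul_assoc, omega_pow_mul_conj_omega_pow, one_mul]

end Orthogonal

theorem Polynomial.coeff_comp_C_mul_X {R : Type*} [CommSemiring R] (p : R[X]) (a : R) (m : ℕ) :
    (p.comp (C a * X)).coeff m = a ^ m * p.coeff m := by
  rw [comp, eval₂_eq_sum_range, finsetSum_coeff]
  simp only [mul_pow, ← C_pow, ← mul_assoc, ← C_mul, coeff_C_mul_X_pow]
  rw [Finset.sum_ite_eq]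
  split_ifs with h
  · ring
  · rw [coeff_eq_zero_of_natDegree_lt (by simpa using h), mul_zero]

theorem Polynomial.coeff_eq_zero_of_eval_omega_mul {P : ℂ[X]} {n m : ℕ}
    (hP : ∀ z, P.eval (ω * z) = ω ^ n * P.eval z) (hm : ¬m ≡ n [MOD 3]) : P.coeff m = 0 := by
  have hcomp : P.comp (C ω * X) = C (ω ^ n) * P := Polynomial.funext fun z => by simp [hP]
  have hcoeff := congrArg (coeff · m) hcomp
  simp only [coeff_comp_C_mul_X, coeff_C_mul] at hcoeff
  by_contra hc
  exact hm (omega_pow_eq_omega_pow_iff.mp (mul_right_cancel₀ hc hcoeff))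

theorem Polynomial.exists_monic_eq_X_pow_mul_expand {R : Type*} [CommRing R] [Nontrivial R]
    {P : R[X]} {p k e : ℕ} (hp : 0 < p) (he : e < p) (hP : P.Monic)
    (hPdeg : P.natDegree = p * k + e) (hcoeff : ∀ m, ¬m ≡ e [MOD p] → P.coeff m = 0) :
    ∃ q : R[X], q.Monic ∧ q.natDegree = k ∧ P = X ^ e * expand R p q := by
  obtain ⟨P', hP'⟩ : X ^ e ∣ P := X_pow_dvd_iff.mpr fun m hm => hcoeff m fun hme => by
    rw [Nat.ModEq, Nat.mod_eq_of_lt (hm.trans he), Nat.mod_eq_of_lt he] at hme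
    omega
  have hP'_expand : expand R p (contract p P') = P' := by
    ext m
    rw [coeff_expand hp, coeff_contract hp.ne']
    split_ifs with hdvd
    · rw [Nat.div_mul_cancel hdvd]
    · have hme : ¬m + e ≡ e [MOD p] := fun h =>
        hdvd (Nat.modEq_zero_iff_dvd.mp (Nat.ModEq.add_right_cancel' e (by rwa [zero_add])))
      rw [← hcoeff _ hme, hP', mul_comm, coeff_mul_X_pow]
  set q := contract p P'
  have hq_expand : (expand R p q).Monic :=
    hP'_expand ▸ (monic_X_pow e).of_mul_monic_left (hP' ▸ hP)
  refine ⟨q, (leadingCoeff_expand hp).symm.trans hq_expand, ?_, hP'_expand ▸ hP'⟩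
  have hdeg := (monic_X_pow e).natDegree_mul hq_expand
  rw [hP'_expand, ← hP', hPdeg, natDegree_X_pow, ← hP'_expand, natDegree_expand] at hdeg
  exact (Nat.eq_of_mul_eq_mul_left hp (by linarith)).symm

theorem starIntegral_eval_mul_conj_pow_of_modEq {α : ℝ} {s : ℝ → ℝ} {P : ℂ[X]} {n r : ℕ}
    (hP : ∀ z, P.eval (ω * z) = ω ^ n * P.eval z) (hr : r ≡ n [MOD 3]) :
    starIntegral α s (fun z => P.eval z * conj (z ^ r)) =
      3 * ∫ t in (0 : ℝ)..α, P.eval (t : ℂ) * (t : ℂ) ^ r * s t := by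
  rw [starIntegral_eq_three_mul_of_comp_omega_mul fun z => ?_]
  · simp only [map_pow, conj_ofReal]
  rw [hP, omega_pow_eq_omega_pow_iff.mpr hr.symm, mul_pow, map_mul, map_pow, map_pow]
  linear_combination (P.eval z * conj z ^ r) * omega_pow_mul_conj_omega_pow r

theorem integral_comp_pow_three (a b : ℝ) (f : ℝ → ℂ) :
    ∫ τ in a ^ 3..b ^ 3, f τ = ∫ t in a..b, (3 * t ^ 2) • f (t ^ 3) :=
  (integral_deriv_smul_comp_of_deriv_nonneg (f := fun t => t ^ 3) (by fun_prop)
    (fun t _ => by simpa using hasDerivAt_pow 3 t) (fun t _ => by positivity)).symm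

theorem integral_eval_mul_pow_mul_weight_eq {α : ℝ} {s w : ℝ → ℝ} {P q : ℂ[X]} {e : ℕ}
    (hα : 0 ≤ α) (hPq : P = X ^ e * expand ℂ 3 q)
    (hw : ∀ t > 0, w (t ^ 3) * t ^ 2 = t ^ (2 * e) * s t) (j : ℕ) :
    ∫ τ in (0 : ℝ)..α ^ 3, q.eval (τ : ℂ) * (τ : ℂ) ^ j * (w τ : ℂ) =
      3 * ∫ t in (0 : ℝ)..α, P.eval (t : ℂ) * (t : ℂ) ^ (3 * j + e) * s t := by
  have hsubst := integral_comp_pow_three 0 α fun τ => q.eval (τ : ℂ) * (τ : ℂ) ^ j * (w τ : ℂ)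
  rw [zero_pow three_ne_zero] at hsubst
  rw [hsubst, ← intervalIntegral.integral_const_mul]
  refine integral_congr_ae (Filter.Eventually.of_forall fun t ht => ?_)
  have ht0 : 0 < t := by rw [uIoc_of_le hα] at ht; exact ht.1
  have hwt : (w (t ^ 3) : ℂ) * (t : ℂ) ^ 2 = (t : ℂ) ^ (2 * e) * s t := by exact_mod_cast hw t ht0
  simp only [hPq, eval_mul, eval_pow, eval_X, expand_eval, real_smul]
  push_cast
  linear_combination (3 * q.eval ((t : ℂ) ^ 3) * (t : ℂ) ^ (3 * j)) * hwt

theorem Polynomial.exists_monic_integral_weight_orthogonal {α : ℝ} {s w : ℝ → ℝ} (hα : 0 ≤ α)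
    {P : ℂ[X]} {k e : ℕ} (he : e < 3) (hP : P.Monic) (hPdeg : P.natDegree = 3 * k + e)
    (hP_rot : ∀ z, P.eval (ω * z) = ω ^ (3 * k + e) * P.eval z)
    (hP_orth : ∀ r < 3 * k + e, starIntegral α s (fun z => P.eval z * conj (z ^ r)) = 0)
    (hw : ∀ t > 0, w (t ^ 3) * t ^ 2 = t ^ (2 * e) * s t) :
    ∃ q : ℂ[X], q.Monic ∧ q.natDegree = k ∧ (∀ z, P.eval z = z ^ e * q.eval (z ^ 3)) ∧
      ∀ j < k, ∫ τ in (0 : ℝ)..α ^ 3, q.eval (τ : ℂ) * (τ : ℂ) ^ j * (w τ : ℂ) = 0 := by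
  have hmod : 3 * k + e ≡ e [MOD 3] := by simp [Nat.ModEq]
  obtain ⟨q, hq, hqk, hPq⟩ := exists_monic_eq_X_pow_mul_expand three_pos he hP hPdeg
    fun m hm => coeff_eq_zero_of_eval_omega_mul hP_rot fun h => hm (h.trans hmod)
  refine ⟨q, hq, hqk, fun z => by simp [hPq, expand_eval], fun j hj => ?_⟩
  rw [integral_eval_mul_pow_mul_weight_eq hα hPq hw,
    ← starIntegral_eval_mul_conj_pow_of_modEq hP_rot (by simp [Nat.ModEq]),
    hP_orth _ (by omega)]

theorem rcbrt_pow_three {t : ℝ} (ht : 0 < t) : rcbrt (t ^ 3) = t := by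
  have h3 : (0:ℝ) < t ^ 3 := by positivity
  rw [rcbrt, Real.sign_of_pos h3, abs_of_pos h3, one_mul, ← Real.rpow_natCast t 3,
    ← Real.rpow_mul ht.le]
  norm_num

theorem statement17_general (α : ℝ) (hα : 0 < α) (s₁ : ℝ → ℝ)
    (hs₁pos : ∀ t ∈ Set.Ioo 0 α, 0 ≤ s₁ t)
    (hs₁int : IntervalIntegrable s₁ volume 0 α)
    (hs₁ne : ∫ t in (0:ℝ)..α, s₁ t ≠ 0)
    (lam1 : Measure ℂ)
    (hrep : ∀ g : ℂ → ℂ, Continuous g →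
      ∫ z, g z ∂lam1 =
        ∑ k ∈ Finset.range 3, ∫ t in (0:ℝ)..α, g (ω ^ k * (t : ℂ)) * (s₁ t : ℂ))
    (π : ℕ → Polynomial ℂ)
    (hmonic : ∀ n, (π n).Monic) (hdeg : ∀ n, (π n).natDegree = n)
    (horth : ∀ n, ∀ k < n, ∫ z, (π n).eval z * starRingEnd ℂ (z ^ k) ∂lam1 = 0) :
    (∀ n : ℕ, ∀ z : ℂ, (π n).eval (ω * z) = ω ^ n * (π n).eval z) ∧
    (∀ k : ℕ,
      -- π_{3k}(τ^{1/3}) : monic OP of degree k for s₁(τ^{1/3}) τ^{-2/3} dτ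
      (∃ q : Polynomial ℂ, q.Monic ∧ q.natDegree = k ∧
        (∀ z : ℂ, (π (3 * k)).eval z = q.eval (z ^ 3)) ∧
        (∀ j < k, ∫ τ in (0:ℝ)..(α ^ 3),
          q.eval (τ : ℂ) * (τ : ℂ) ^ j * ((s₁ (rcbrt τ) / (rcbrt τ) ^ 2 : ℝ) : ℂ) = 0)) ∧
      -- π_{3k+1}(τ^{1/3})/τ^{1/3} : monic OP of degree k for s₁(τ^{1/3}) dτ
      (∃ q : Polynomial ℂ, q.Monic ∧ q.natDegree = k ∧
        (∀ z : ℂ, (π (3 * k + 1)).eval z = z * q.eval (z ^ 3)) ∧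
        (∀ j < k, ∫ τ in (0:ℝ)..(α ^ 3),
          q.eval (τ : ℂ) * (τ : ℂ) ^ j * ((s₁ (rcbrt τ) : ℝ) : ℂ) = 0)) ∧
      -- π_{3k+2}(τ^{1/3})/τ^{2/3} : monic OP of degree k for s₁(τ^{1/3}) τ^{2/3} dτ
      (∃ q : Polynomial ℂ, q.Monic ∧ q.natDegree = k ∧
        (∀ z : ℂ, (π (3 * k + 2)).eval z = z ^ 2 * q.eval (z ^ 3)) ∧
        (∀ j < k, ∫ τ in (0:ℝ)..(α ^ 3),
          q.eval (τ : ℂ) * (τ : ℂ) ^ j * ((s₁ (rcbrt τ) * (rcbrt τ) ^ 2 : ℝ) : ℂ) = 0))) := by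
  have hs₁_ae : 0 ≤ᵐ[volume.restrict (Ioc 0 α)] s₁ := by
    rw [← Measure.restrict_congr_set Ioo_ae_eq_Ioc]
    exact ae_restrict_of_forall_mem measurableSet_Ioo hs₁pos
  have hstar : ∀ n, ∀ k < n, starIntegral α s₁ (fun z => (π n).eval z * conj (z ^ k)) = 0 :=
    fun n k hk =>
      (hrep (fun z => (π n).eval z * conj (z ^ k)) (by fun_prop)).symm.trans (horth n k hk)
  have hrot : ∀ n z, (π n).eval (ω * z) = ω ^ n * (π n).eval z := fun n =>
    eval_omega_mul_of_starIntegral_orthogonal hα.le hs₁_ae hs₁int hs₁ne (hmonic n) (hdeg n)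
      (hstar n)
  have hcube := fun k e (he : e < 3) (w : ℝ → ℝ) =>
    exists_monic_integral_weight_orthogonal (w := w) hα.le he (hmonic (3 * k + e)) (hdeg _)
      (hrot _) (hstar _)
  refine ⟨hrot, fun k => ⟨?_, ?_, ?_⟩⟩
  · obtain ⟨q, hq, hqk, hq_eval, hq_orth⟩ := hcube k 0 (by norm_num)
      (fun τ => s₁ (rcbrt τ) / rcbrt τ ^ 2) fun t ht => by
        simp [rcbrt_pow_three ht, ht.ne']
    exact ⟨q, hq, hqk, fun z => by simpa using hq_eval z, hq_orth⟩
  · obtain ⟨q, hq, hqk, hq_eval, hq_orth⟩ := hcube k 1 (by norm_num)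
      (fun τ => s₁ (rcbrt τ)) fun t ht => by rw [rcbrt_pow_three ht]; ring
    exact ⟨q, hq, hqk, fun z => by simpa using hq_eval z, hq_orth⟩
  · exact hcube k 2 (by norm_num) (fun τ => s₁ (rcbrt τ) * rcbrt τ ^ 2) fun t ht => by
      rw [rcbrt_pow_three ht]; ring

/-- Let `lam1` be the rotationally invariant positive measure on the
star `S₀` whose restriction to `[0,α]` is `s₁(x)dx` (encoded by the integral
representation hypothesis `hrep`), and let `π_n` be its `n`-th monic orthogonal
polynomial.  Then `π_n(ωz) = ωⁿ π_n(z)`, and the polynomials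
`π_{3k}(τ^{1/3})`, `π_{3k+1}(τ^{1/3})/τ^{1/3}`, `π_{3k+2}(τ^{1/3})/τ^{2/3}`
are the monic orthogonal polynomials of degree `k` with respect to
`s₁(τ^{1/3})τ^{-2/3}dτ`, `s₁(τ^{1/3})dτ`, `s₁(τ^{1/3})τ^{2/3}dτ` on `[0,α³]`. -/
theorem statement17 (α : ℝ) (hα : 0 < α) (s₁ : ℝ → ℝ)
    (hs₁pos : ∀ t ∈ Set.Ioo 0 α, 0 ≤ s₁ t)
    (hs₁int : IntervalIntegrable s₁ volume 0 α)
    (hs₁ne : ∫ t in (0:ℝ)..α, s₁ t ≠ 0)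
    (lam1 : Measure ℂ) [IsFiniteMeasure lam1]
    (hrep : ∀ g : ℂ → ℂ, Continuous g →
      ∫ z, g z ∂lam1 =
        ∑ k ∈ Finset.range 3, ∫ t in (0:ℝ)..α, g (ω ^ k * (t : ℂ)) * (s₁ t : ℂ))
    (π : ℕ → Polynomial ℂ)
    (hmonic : ∀ n, (π n).Monic) (hdeg : ∀ n, (π n).natDegree = n)
    (horth : ∀ n, ∀ k < n, ∫ z, (π n).eval z * starRingEnd ℂ (z ^ k) ∂lam1 = 0) :
    (∀ n : ℕ, ∀ z : ℂ, (π n).eval (ω * z) = ω ^ n * (π n).eval z) ∧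
    (∀ k : ℕ,
      -- π_{3k}(τ^{1/3}) : monic OP of degree k for s₁(τ^{1/3}) τ^{-2/3} dτ
      (∃ q : Polynomial ℂ, q.Monic ∧ q.natDegree = k ∧
        (∀ z : ℂ, (π (3 * k)).eval z = q.eval (z ^ 3)) ∧
        (∀ j < k, ∫ τ in (0:ℝ)..(α ^ 3),
          q.eval (τ : ℂ) * (τ : ℂ) ^ j * ((s₁ (rcbrt τ) / (rcbrt τ) ^ 2 : ℝ) : ℂ) = 0)) ∧
      -- π_{3k+1}(τ^{1/3})/τ^{1/3} : monic OP of degree k for s₁(τ^{1/3}) dτ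
      (∃ q : Polynomial ℂ, q.Monic ∧ q.natDegree = k ∧
        (∀ z : ℂ, (π (3 * k + 1)).eval z = z * q.eval (z ^ 3)) ∧
        (∀ j < k, ∫ τ in (0:ℝ)..(α ^ 3),
          q.eval (τ : ℂ) * (τ : ℂ) ^ j * ((s₁ (rcbrt τ) : ℝ) : ℂ) = 0)) ∧
      -- π_{3k+2}(τ^{1/3})/τ^{2/3} : monic OP of degree k for s₁(τ^{1/3}) τ^{2/3} dτ
      (∃ q : Polynomial ℂ, q.Monic ∧ q.natDegree = k ∧
        (∀ z : ℂ, (π (3 * k + 2)).eval z = z ^ 2 * q.eval (z ^ 3)) ∧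
        (∀ j < k, ∫ τ in (0:ℝ)..(α ^ 3),
          q.eval (τ : ℂ) * (τ : ℂ) ^ j * ((s₁ (rcbrt τ) * (rcbrt τ) ^ 2 : ℝ) : ℂ) = 0))) :=
  statement17_general α hα s₁ hs₁pos hs₁int hs₁ne lam1 hrep π hmonic hdeg horth

end
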